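/- Fix p > 1, n ∈ ℕ, and a block decomposition k of {1, …, n}. For every λ > 0, the maximum translative superball packing density is bounded below by the asymptotic expected packing density of the hard superball model on superballs: Δ_{p,k}(n) ≥ limsup_{R→∞} α_{B^n_{p,k}(R)}(λ). -/

import Mathlib

open MeasureTheory Filter
open scoped BigOperators ENNReal

/-- The superball norm on `ℝ^n` associated to exponent `p` and a block decomposition
given by `m` blocks with endpoints `k 0 = 0 < k 1 < ⋯ < k m = n`:
`‖x‖ = (∑_{j<m} ‖(x_{k j}, …, x_{k (j+1) - 1})‖₂^p)^(1/p)`. -/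
noncomputable def superNorm (p : ℝ) {n : ℕ} (m : ℕ) (k : ℕ → ℕ) (x : Fin n → ℝ) : ℝ :=
  (∑ j ∈ Finset.range m,
      (Real.sqrt (∑ i : Fin n, if k j ≤ (i : ℕ) ∧ (i : ℕ) < k (j + 1) then x i ^ 2 else 0)) ^ p)
    ^ (1 / p)

/-- `k` is a block decomposition of `{1, …, n}` into `m` blocks. -/
def IsBlockDecomp (n m : ℕ) (k : ℕ → ℕ) : Prop :=
  0 < m ∧ k 0 = 0 ∧ k m = n ∧ ∀ j < m, k j < k (j + 1)

/-- The superball with center `c` and radius `r`. -/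
noncomputable def superBall (p : ℝ) {n : ℕ} (m : ℕ) (k : ℕ → ℕ) (c : Fin n → ℝ) (r : ℝ) :
    Set (Fin n → ℝ) :=
  {y | superNorm p m k (y - c) ≤ r}

/-- `P` is the set of centers of a translative packing of superballs of radius `r`. -/
def IsSuperballPacking (p : ℝ) {n : ℕ} (m : ℕ) (k : ℕ → ℕ) (r : ℝ)
    (P : Set (Fin n → ℝ)) : Prop :=
  ∀ x ∈ P, ∀ y ∈ P, x ≠ y → 2 * r ≤ superNorm p m k (x - y)

/-- The translative packing density of superballs of radius `r` in `ℝ^n`. -/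
noncomputable def packingDensity (p : ℝ) (n m : ℕ) (k : ℕ → ℕ) (r : ℝ) : ℝ :=
  limsup (fun R : ℝ =>
      ⨆ P : {P : Set (Fin n → ℝ) // IsSuperballPacking p m k r P},
        (volume ((⋃ x ∈ P.1, superBall p m k x r) ∩ superBall p m k 0 R)).toReal /
          (volume (superBall p m k (0 : Fin n → ℝ) R)).toReal) atTop

/-- The canonical hard superball model partition function `Ẑ_S(t)`. -/
noncomputable def Zhat (p : ℝ) {n : ℕ} (m : ℕ) (k : ℕ → ℕ) (r : ℝ) (S : Set (Fin n → ℝ))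
    (t : ℕ) : ℝ :=
  ((t.factorial : ℝ))⁻¹ *
    ∫ x : Fin t → Fin n → ℝ in Set.univ.pi fun _ => S,
      Set.indicator
        {y : Fin t → Fin n → ℝ | ∀ i j : Fin t, i ≠ j → 2 * r ≤ superNorm p m k (y i - y j)}
        (fun _ => (1 : ℝ)) x

/-- The grand canonical hard superball model partition function `Z_S(λ)`. -/
noncomputable def Zgc (p : ℝ) {n : ℕ} (m : ℕ) (k : ℕ → ℕ) (r : ℝ) (S : Set (Fin n → ℝ))
    (lam : ℝ) : ℝ :=
  ∑' t : ℕ, lam ^ t * Zhat p m k r S t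

/-- The expected packing density `α_S(λ)` of the hard superball model. -/
noncomputable def alphaDen (p : ℝ) {n : ℕ} (m : ℕ) (k : ℕ → ℕ) (r : ℝ) (S : Set (Fin n → ℝ))
    (lam : ℝ) : ℝ :=
  lam * deriv (Zgc p m k r S) lam / ((volume S).toReal * Zgc p m k r S lam)



/-! If `t` points of `B(R)` are `2r`-separated, the superballs of radius `r` around them form a
packing that lies in `B(R + r)`, and these balls are pairwise almost disjoint: they can only meet
on spheres, which are null as frontiers of convex sets. Hence `t ≤ vol B(R + r) · δ(R + r)`, where
`δ(R')` is the largest fraction of `B(R')` that a packing can cover. So `Ẑ_{B(R)}(t)` vanishes for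
larger `t`, `Z_{B(R)}` is a polynomial with nonnegative coefficients, and `λ Z'(λ) ≤ t_max Z(λ)`
gives `α_{B(R)}(λ) ≤ (1 + r / R)^n δ(R + r)`. Let `R → ∞`. -/

open scoped Topology

namespace Seminorm

section Topology

variable {E : Type*} [AddCommGroup E] [Module ℝ E] [TopologicalSpace E] [ContinuousSMul ℝ E]
  (q : Seminorm ℝ E)

theorem interior_closedBall_zero_subset_ball {R : ℝ} (hR : 0 < R) :
    interior (q.closedBall 0 R) ⊆ q.ball 0 R := by
  intro z hz
  have hlim : Tendsto (fun c : ℝ => c • z) (𝓝[>] 1) (𝓝 z) := by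
    simpa using ((tendsto_id (x := 𝓝 (1 : ℝ))).smul_const z).mono_left nhdsWithin_le_nhds
  obtain ⟨c, hc, hc1⟩ :=
    ((hlim.eventually (isOpen_interior.mem_nhds hz)).and self_mem_nhdsWithin).exists
  have hc1 : (1 : ℝ) < c := hc1
  have hcz : c * q z ≤ R := by
    simpa [mem_closedBall_zero, map_smul_eq_mul, abs_of_pos (one_pos.trans hc1)]
      using interior_subset hc
  rw [mem_ball_zero]
  nlinarith [apply_nonneg q z]

theorem sphere_subset_frontier_closedBall {R : ℝ} (hR : 0 < R) :
    {z | q z = R} ⊆ frontier (q.closedBall 0 R) := fun _ hz =>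
  ⟨subset_closure (q.mem_closedBall_zero.2 hz.le), fun hint =>
    (q.mem_ball_zero.1 (q.interior_closedBall_zero_subset_ball hR hint)).ne hz⟩

end Topology

section Measure

variable {E : Type*} [NormedAddCommGroup E] [NormedSpace ℝ E] [FiniteDimensional ℝ E]
  [MeasurableSpace E] [BorelSpace E] (μ : Measure E) [μ.IsAddHaarMeasure] (q : Seminorm ℝ E)

theorem addHaar_sphere_zero {R : ℝ} (hR : 0 < R) : μ {z | q z = R} = 0 :=
  measure_mono_null (q.sphere_subset_frontier_closedBall hR)
    ((convex_closedBall q 0 R).addHaar_frontier μ)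

theorem addHaar_closedBall_center (c : E) (R : ℝ) :
    μ (q.closedBall c R) = μ (q.closedBall 0 R) := by
  rw [← add_zero c, ← vadd_eq_add, ← q.vadd_closedBall, measure_vadd]

theorem addHaar_closedBall_mul_of_pos (c : E) {a : ℝ} (ha : 0 < a) (R : ℝ) :
    μ (q.closedBall c (a * R)) =
      ENNReal.ofReal (a ^ Module.finrank ℝ E) * μ (q.closedBall 0 R) := by
  rw [addHaar_closedBall_center, ← Real.norm_of_nonneg ha.le,
    ← smul_closedBall_zero (norm_pos_iff.2 ha.ne'), Real.norm_of_nonneg ha.le,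
    Measure.addHaar_smul_of_nonneg μ ha.le]

theorem addHaar_iUnion_closedBall_of_separated {ι : Type*} [Fintype ι] {y : ι → E} {r : ℝ}
    (hr : 0 < r) (hsep : Pairwise fun i j => 2 * r ≤ q (y i - y j)) :
    μ (⋃ i, q.closedBall (y i) r) = Fintype.card ι * μ (q.closedBall 0 r) := by
  have hdisj : Pairwise (Function.onFun (AEDisjoint μ) fun i => q.closedBall (y i) r) := by
    intro i j hij
    refine measure_mono_null (t := (· - y i) ⁻¹' {z | q z = r}) ?_ ?_
    · rintro z ⟨hzi, hzj⟩
      rw [mem_closedBall] at hzi hzj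
      have htri := map_sub_le_add q (y i - z) (y j - z)
      rw [sub_sub_sub_cancel_right, map_sub_rev q (y i) z, map_sub_rev q (y j) z] at htri
      show q (z - y i) = r
      exact le_antisymm hzi (by linarith [hsep hij])
    · simp_rw [sub_eq_add_neg]
      rw [measure_preimage_add_right, addHaar_sphere_zero μ q hr]
  rw [measure_iUnion₀ hdisj fun i => (convex_closedBall q _ _).nullMeasurableSet (μ := μ),
    tsum_fintype]
  simp [addHaar_closedBall_center]

end Measure

end Seminorm

section PowerSeries

open Finset

variable {a : ℕ → ℝ}

theorem tsum_pow_mul_eq_sum_range {N : ℕ} (ha : ∀ t, N ≤ t → a t = 0) (x : ℝ) :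
    ∑' t, x ^ t * a t = ∑ t ∈ range N, x ^ t * a t :=
  tsum_eq_sum fun t ht => by rw [ha t (by simpa using ht), mul_zero]

theorem mul_deriv_sum_pow_mul (s : Finset ℕ) (x : ℝ) :
    x * deriv (fun y => ∑ t ∈ s, y ^ t * a t) x = ∑ t ∈ s, t * (x ^ t * a t) := by
  rw [deriv_fun_sum fun t _ => (differentiableAt_pow t).mul_const _, mul_sum]
  refine sum_congr rfl fun t _ => ?_
  rw [deriv_mul_const (differentiableAt_pow t), deriv_pow_field]
  rcases t with _ | t
  · simp
  · rw [pow_succ]; push_cast; ring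

theorem mul_deriv_sum_pow_mul_le (ha : ∀ t, 0 ≤ a t) {T : ℝ} (hT : ∀ t, a t ≠ 0 → (t : ℝ) ≤ T)
    (s : Finset ℕ) {x : ℝ} (hx : 0 ≤ x) :
    x * deriv (fun y => ∑ t ∈ s, y ^ t * a t) x ≤ T * ∑ t ∈ s, x ^ t * a t := by
  rw [mul_deriv_sum_pow_mul, mul_sum]
  refine sum_le_sum fun t _ => ?_
  rcases eq_or_ne (a t) 0 with h | h
  · simp [h]
  · exact mul_le_mul_of_nonneg_right (hT t h) (mul_nonneg (pow_nonneg hx t) (ha t))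

theorem mul_deriv_sum_pow_mul_nonneg (ha : ∀ t, 0 ≤ a t) (s : Finset ℕ) {x : ℝ} (hx : 0 ≤ x) :
    0 ≤ x * deriv (fun y => ∑ t ∈ s, y ^ t * a t) x := by
  rw [mul_deriv_sum_pow_mul]
  exact sum_nonneg fun t _ => by have := ha t; positivity

end PowerSeries

theorem limsup_le_limsup_of_le_mul_comp_add {f g q : ℝ → ℝ} {c : ℝ}
    (hf : ∀ᶠ x in atTop, 0 ≤ f x) (hg : ∀ᶠ x in atTop, g x ∈ Set.Icc 0 1)
    (hq : Tendsto q atTop (𝓝 1)) (hfg : ∀ᶠ x in atTop, f x ≤ q x * g (x + c)) :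
    limsup f atTop ≤ limsup g atTop := by
  have hq' : Tendsto (fun x => |q x - 1|) atTop (𝓝 0) := by
    simpa using (hq.sub_const 1).abs
  have hgc : ∀ᶠ x in atTop, g (x + c) ∈ Set.Icc 0 1 :=
    (tendsto_atTop_add_const_right _ c tendsto_id).eventually hg
  have hle : ∀ᶠ x in atTop, f x ≤ g (x + c) + |q x - 1| := by
    filter_upwards [hfg, hgc] with x hx ⟨hg0, hg1⟩
    nlinarith [le_abs_self (q x - 1), abs_nonneg (q x - 1)]
  have hbdd : ∀ᶠ x in atTop, g (x + c) + |q x - 1| ≤ 1 + 1 := by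
    filter_upwards [hgc, hq'.eventually (eventually_le_nhds zero_lt_one)] with x hx h1
    exact add_le_add hx.2 h1
  calc limsup f atTop ≤ limsup (fun x => g (x + c) + |q x - 1|) atTop :=
        limsup_le_limsup hle (isCoboundedUnder_le_of_eventually_le _ hf)
          (isBoundedUnder_of_eventually_le hbdd)
    _ ≤ limsup (fun x => g (x + c)) atTop + limsup (fun x => |q x - 1|) atTop :=
        limsup_add_le (isBoundedUnder_of_eventually_ge (hgc.mono fun _ h => h.1))
          (isBoundedUnder_of_eventually_le (hgc.mono fun _ h => h.2))
          hq'.isCoboundedUnder_le hq'.isBoundedUnder_le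
    _ = limsup g atTop := by
        rw [hq'.limsup_eq, add_zero]
        exact congrArg (limsup g) (map_add_atTop_eq c)

namespace Superball

open Finset

variable {p : ℝ} {n m : ℕ} {k : ℕ → ℕ} {r : ℝ}

noncomputable def blockProj (k : ℕ → ℕ) (j : ℕ) : (Fin n → ℝ) →ₗ[ℝ] EuclideanSpace ℝ (Fin n) :=
  (WithLp.linearEquiv 2 ℝ (Fin n → ℝ)).symm.toLinearMap ∘ₗ
    LinearMap.pi fun i => if k j ≤ (i : ℕ) ∧ (i : ℕ) < k (j + 1) then LinearMap.proj i else 0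

theorem norm_blockProj (k : ℕ → ℕ) (j : ℕ) (x : Fin n → ℝ) :
    ‖blockProj k j x‖ =
      Real.sqrt (∑ i : Fin n, if k j ≤ (i : ℕ) ∧ (i : ℕ) < k (j + 1) then x i ^ 2 else 0) := by
  rw [EuclideanSpace.norm_eq]
  congr 1
  refine sum_congr rfl fun i _ => ?_
  split_ifs with h <;> simp [blockProj, h]

variable (p m k) in
noncomputable def blockVector :
    (Fin n → ℝ) →ₗ[ℝ] PiLp (ENNReal.ofReal p) fun _ : Fin m => EuclideanSpace ℝ (Fin n) :=
  (WithLp.linearEquiv _ ℝ _).symm.toLinearMap ∘ₗ LinearMap.pi fun j => blockProj k j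

section Ball

variable [hp : Fact (1 ≤ ENNReal.ofReal p)]

variable (p m k) in
/-- `superNorm` is the `ℓ^p` norm of the vector of block norms, so it is a seminorm
(Minkowski's inequality in `PiLp`). -/
noncomputable def superSeminorm : Seminorm ℝ (Fin n → ℝ) :=
  (normSeminorm ℝ _).comp (blockVector p m k)

theorem superSeminorm_apply (x : Fin n → ℝ) : superSeminorm p m k x = superNorm p m k x := by
  have hp0 : 0 < p := one_pos.trans_le (ENNReal.one_le_ofReal.1 hp.out)
  rw [superSeminorm, Seminorm.comp_apply, coe_normSeminorm,
    PiLp.norm_eq_sum (by rwa [ENNReal.toReal_ofReal hp0.le]), ENNReal.toReal_ofReal hp0.le,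
    superNorm, sum_range]
  simp [blockVector, norm_blockProj]

theorem superBall_eq_closedBall (c : Fin n → ℝ) (R : ℝ) :
    superBall p m k c R = (superSeminorm p m k).closedBall c R := by
  ext y
  rw [Seminorm.mem_closedBall, superSeminorm_apply]
  rfl

theorem volume_superBall (hr : 0 < r) (hvol : volume (superBall p m k (0 : Fin n → ℝ) r) = 1)
    (c : Fin n → ℝ) {R : ℝ} (hR : 0 < R) :
    volume (superBall p m k c R) = ENNReal.ofReal ((R / r) ^ n) := by
  nth_rw 1 [superBall_eq_closedBall, ← div_mul_cancel₀ R hr.ne']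
  rw [Seminorm.addHaar_closedBall_mul_of_pos _ _ _ (div_pos hR hr), ← superBall_eq_closedBall, hvol,
    mul_one, Module.finrank_fin_fun]

theorem volume_superBall_toReal (hr : 0 < r)
    (hvol : volume (superBall p m k (0 : Fin n → ℝ) r) = 1) {R : ℝ} (hR : 0 < R) :
    (volume (superBall p m k (0 : Fin n → ℝ) R)).toReal = (R / r) ^ n := by
  rw [volume_superBall hr hvol 0 hR, ENNReal.toReal_ofReal (by positivity)]

theorem volume_superBall_ne_top (hr : 0 < r)
    (hvol : volume (superBall p m k (0 : Fin n → ℝ) r) = 1) {R : ℝ} (hR : 0 < R) :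
    volume (superBall p m k (0 : Fin n → ℝ) R) ≠ ⊤ := by
  rw [volume_superBall hr hvol 0 hR]
  exact ENNReal.ofReal_ne_top

end Ball

section PartitionFunction

variable {S : Set (Fin n → ℝ)}

theorem Zhat_nonneg (t : ℕ) : 0 ≤ Zhat p m k r S t :=
  mul_nonneg (by positivity)
    (integral_nonneg fun _ => Set.indicator_nonneg (fun _ _ => zero_le_one) _)

theorem Zhat_zero : Zhat p m k r S 0 = 1 := by
  simp [Zhat, measureReal_def, volume_pi]

theorem Zhat_eq_zero_of_forall_not_separated {t : ℕ}
    (h : ∀ y : Fin t → Fin n → ℝ, (∀ i, y i ∈ S) →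
      ¬ ∀ i j : Fin t, i ≠ j → 2 * r ≤ superNorm p m k (y i - y j)) :
    Zhat p m k r S t = 0 := by
  rw [Zhat, setIntegral_eq_zero_of_forall_eq_zero, mul_zero]
  intro y (hy : ∀ i ∈ Set.univ, y i ∈ S)
  refine Set.indicator_of_notMem ?_ _
  exact h y fun i => hy i trivial

variable {T : ℝ} (hT : ∀ t, Zhat p m k r S t ≠ 0 → (t : ℝ) ≤ T)
include hT

theorem Zgc_eq_sum_range :
    Zgc p m k r S = fun x => ∑ t ∈ range (⌈T⌉₊ + 1), x ^ t * Zhat p m k r S t := by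
  funext x
  refine tsum_pow_mul_eq_sum_range (fun t ht => ?_) x
  by_contra hne
  have : t ≤ ⌈T⌉₊ := by exact_mod_cast (hT t hne).trans (Nat.le_ceil T)
  omega

theorem one_le_Zgc {x : ℝ} (hx : 0 ≤ x) : 1 ≤ Zgc p m k r S x := by
  rw [Zgc_eq_sum_range hT]
  calc (1 : ℝ) = x ^ 0 * Zhat p m k r S 0 := by rw [pow_zero, one_mul, Zhat_zero]
    _ ≤ _ := single_le_sum (f := fun t => x ^ t * Zhat p m k r S t)
        (fun t _ => mul_nonneg (pow_nonneg hx t) (Zhat_nonneg t)) (by simp)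

theorem alphaDen_nonneg {lam : ℝ} (hlam : 0 ≤ lam) : 0 ≤ alphaDen p m k r S lam := by
  refine div_nonneg ?_
    (mul_nonneg ENNReal.toReal_nonneg (zero_le_one.trans (one_le_Zgc hT hlam)))
  rw [Zgc_eq_sum_range hT]
  exact mul_deriv_sum_pow_mul_nonneg Zhat_nonneg _ hlam

theorem alphaDen_le {lam : ℝ} (hlam : 0 ≤ lam) :
    alphaDen p m k r S lam ≤ T / (volume S).toReal := by
  have hZ : 0 < Zgc p m k r S lam := zero_lt_one.trans_le (one_le_Zgc hT hlam)
  have hmul : lam * deriv (Zgc p m k r S) lam ≤ T * Zgc p m k r S lam := by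
    rw [Zgc_eq_sum_range hT]
    exact mul_deriv_sum_pow_mul_le Zhat_nonneg hT _ hlam
  calc alphaDen p m k r S lam
      ≤ T * Zgc p m k r S lam / ((volume S).toReal * Zgc p m k r S lam) :=
        div_le_div_of_nonneg_right hmul (by positivity)
    _ = T / (volume S).toReal := mul_div_mul_right _ _ hZ.ne'

end PartitionFunction

section Packing

variable (p m k r) in
noncomputable def coveredFraction (R : ℝ) (P : Set (Fin n → ℝ)) : ℝ :=
  (volume ((⋃ x ∈ P, superBall p m k x r) ∩ superBall p m k 0 R)).toReal /
    (volume (superBall p m k (0 : Fin n → ℝ) R)).toReal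

variable (p n m k r) in
noncomputable def bestCoveredFraction (R : ℝ) : ℝ :=
  ⨆ P : {P : Set (Fin n → ℝ) // IsSuperballPacking p m k r P}, coveredFraction p m k r R P.1

theorem packingDensity_eq_limsup :
    packingDensity p n m k r = limsup (bestCoveredFraction p n m k r) atTop := rfl

theorem coveredFraction_le_one {R : ℝ} (hR : volume (superBall p m k (0 : Fin n → ℝ) R) ≠ ⊤)
    (P : Set (Fin n → ℝ)) : coveredFraction p m k r R P ≤ 1 :=
  div_le_one_of_le₀ (ENNReal.toReal_mono hR (measure_mono Set.inter_subset_right))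
    ENNReal.toReal_nonneg

theorem bestCoveredFraction_mem_Icc {R : ℝ}
    (hR : volume (superBall p m k (0 : Fin n → ℝ) R) ≠ ⊤) :
    bestCoveredFraction p n m k r R ∈ Set.Icc 0 1 :=
  ⟨Real.iSup_nonneg fun _ => by unfold coveredFraction; positivity,
    Real.iSup_le (fun P => coveredFraction_le_one hR P.1) zero_le_one⟩

theorem coveredFraction_le_bestCoveredFraction {R : ℝ}
    (hR : volume (superBall p m k (0 : Fin n → ℝ) R) ≠ ⊤) {P : Set (Fin n → ℝ)}
    (hP : IsSuperballPacking p m k r P) :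
    coveredFraction p m k r R P ≤ bestCoveredFraction p n m k r R :=
  le_ciSup (f := fun P : {P // IsSuperballPacking p m k r P} => coveredFraction p m k r R P.1)
    ⟨1, by rintro _ ⟨P, rfl⟩; exact coveredFraction_le_one hR P.1⟩ ⟨P, hP⟩

variable [Fact (1 ≤ ENNReal.ofReal p)]
  (hr : 0 < r) (hvol : volume (superBall p m k (0 : Fin n → ℝ) r) = 1)
include hr hvol

theorem card_le_of_separated_mem_superBall {R : ℝ} (hR : 0 < R) {t : ℕ}
    (y : Fin t → Fin n → ℝ) (hy : ∀ i, y i ∈ superBall p m k 0 R)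
    (hsep : ∀ i j, i ≠ j → 2 * r ≤ superNorm p m k (y i - y j)) :
    (t : ℝ) ≤ ((R + r) / r) ^ n * bestCoveredFraction p n m k r (R + r) := by
  set q : Seminorm ℝ (Fin n → ℝ) := superSeminorm p m k
  have hRr : 0 < R + r := add_pos hR hr
  have hU : ⋃ x ∈ Set.range y, superBall p m k x r = ⋃ i, q.closedBall (y i) r := by
    simp [superBall_eq_closedBall, q]
  have hvolU : volume (⋃ i, q.closedBall (y i) r) = t := by
    rw [q.addHaar_iUnion_closedBall_of_separated volume hr fun i j hij => by
        simpa [q, superSeminorm_apply] using hsep i j hij,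
      ← superBall_eq_closedBall, hvol]
    simp
  have hsub : ⋃ i, q.closedBall (y i) r ⊆ superBall p m k 0 (R + r) := by
    simp only [Set.iUnion_subset_iff, superBall_eq_closedBall]
    intro i z hz
    have hyi : q (y i) ≤ R := by simpa [superBall_eq_closedBall, q] using hy i
    rw [Seminorm.mem_closedBall] at hz
    rw [Seminorm.mem_closedBall_zero]
    calc q z = q ((z - y i) + y i) := by rw [sub_add_cancel]
      _ ≤ q (z - y i) + q (y i) := map_add_le_add q _ _
      _ ≤ R + r := by linarith
  have hpack : IsSuperballPacking p m k r (Set.range y) := by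
    rintro _ ⟨i, rfl⟩ _ ⟨j, rfl⟩ hne
    exact hsep i j (ne_of_apply_ne y hne)
  have hfrac : coveredFraction p m k r (R + r) (Set.range y) = t / ((R + r) / r) ^ n := by
    rw [coveredFraction, hU, Set.inter_eq_left.2 hsub, hvolU,
      volume_superBall_toReal hr hvol hRr]
    simp
  have hle := coveredFraction_le_bestCoveredFraction (volume_superBall_ne_top hr hvol hRr) hpack
  rw [hfrac, div_le_iff₀ (by positivity)] at hle
  linarith

theorem le_of_Zhat_superBall_ne_zero {R : ℝ} (hR : 0 < R) {t : ℕ}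
    (ht : Zhat p m k r (superBall p m k (0 : Fin n → ℝ) R) t ≠ 0) :
    (t : ℝ) ≤ ((R + r) / r) ^ n * bestCoveredFraction p n m k r (R + r) := by
  by_contra hlt
  exact ht (Zhat_eq_zero_of_forall_not_separated fun y hy hsep =>
    hlt (card_le_of_separated_mem_superBall hr hvol hR y hy hsep))

theorem alphaDen_superBall_le {R : ℝ} (hR : 0 < R) {lam : ℝ} (hlam : 0 ≤ lam) :
    alphaDen p m k r (superBall p m k (0 : Fin n → ℝ) R) lam ≤
      (1 + r / R) ^ n * bestCoveredFraction p n m k r (R + r) := by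
  refine (alphaDen_le (fun t => le_of_Zhat_superBall_ne_zero hr hvol hR) hlam).trans_eq ?_
  rw [volume_superBall_toReal hr hvol hR, mul_div_right_comm, ← div_pow,
    div_div_div_cancel_right₀ hr.ne', add_div, div_self hR.ne']

end Packing

end Superball

open Superball in
theorem packingDensity_ge_limsup_alpha (p : ℝ) (hp : 1 < p) (n m : ℕ) (k : ℕ → ℕ)
    (r : ℝ) (hr : 0 < r)
    (hvol : volume (superBall p m k (0 : Fin n → ℝ) r) = 1)
    (lam : ℝ) (hlam : 0 < lam) :
    limsup (fun R : ℝ => alphaDen p m k r (superBall p m k (0 : Fin n → ℝ) R) lam) atTop ≤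
      packingDensity p n m k r := by
  have : Fact (1 ≤ ENNReal.ofReal p) := ⟨ENNReal.one_le_ofReal.2 hp.le⟩
  rw [packingDensity_eq_limsup]
  refine limsup_le_limsup_of_le_mul_comp_add (c := r) (q := fun R => (1 + r / R) ^ n) ?_ ?_ ?_ ?_
  · filter_upwards [eventually_gt_atTop 0] with R hR
    exact alphaDen_nonneg (fun t => le_of_Zhat_superBall_ne_zero hr hvol hR) hlam.le
  · filter_upwards [eventually_gt_atTop 0] with R hR
    exact bestCoveredFraction_mem_Icc (volume_superBall_ne_top hr hvol hR)
  · simpa using ((tendsto_const_nhds (x := (1 : ℝ))).add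
      (tendsto_const_nhds.div_atTop tendsto_id)).pow n
  · filter_upwards [eventually_gt_atTop 0] with R hR
    exact alphaDen_superBall_le hr hvol hR hlam.le
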